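/- arXiv:0712.3473 — 12 statements merged into one kernel-verified Lean document; each statement's English description precedes it below -/
import Mathlib

section
/- In a normal space X, if C is a closed set contained in an open set U, then there exists an open set W whose complement is a regular Gδ set such that C ⊆ W ⊆ closure(W) ⊆ U. -/
open Set

def IsRegGDelta {X : Type*} [TopologicalSpace X] (D : Set X) : Prop :=
  ∃ U : ℕ → Set X, (∀ n, IsOpen (U n)) ∧ (∀ n, D ⊆ U n) ∧ D = ⋂ n, closure (U n)

theorem stmt_5 {X : Type*} [TopologicalSpace X] [NormalSpace X] [T1Space X]
    (C U : Set X) (hC : IsClosed C) (hU : IsOpen U) (hCU : C ⊆ U) :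
    ∃ W : Set X, IsOpen W ∧ IsRegGDelta Wᶜ ∧ C ⊆ W ∧ closure W ⊆ U := by
  obtain ⟨f, hf0, hf1, hf01⟩ := exists_continuous_zero_one_of_isClosed hC hU.isClosed_compl
    (disjoint_compl_right.mono_left hCU)
  refine ⟨{x | f x < 1/2}, isOpen_lt f.continuous continuous_const, ?_, ?_, ?_⟩
  · refine ⟨fun n => {x | 1/2 - 1/(n+1) < f x}, fun n =>
      isOpen_lt continuous_const f.continuous, fun n x hx => ?_, ?_⟩
    · simp only [mem_compl_iff, mem_setOf_eq, not_lt] at hx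
      have : (0:ℝ) < 1/(n+1) := by positivity
      simp only [mem_setOf_eq]; linarith
    · apply Subset.antisymm
      · intro x hx
        simp only [mem_compl_iff, mem_setOf_eq, not_lt] at hx
        refine mem_iInter.2 fun n => subset_closure ?_
        have : (0:ℝ) < 1/(n+1) := by positivity
        simp only [mem_setOf_eq]; linarith
      · intro x hx
        simp only [mem_compl_iff, mem_setOf_eq, not_lt]
        by_contra h
        push_neg at h
        obtain ⟨n, hn⟩ := exists_nat_one_div_lt (show (0:ℝ) < 1/2 - f x by linarith)
        have hx' := mem_iInter.1 hx n
        have hcl : closure {x | 1/2 - 1/(n+1) < f x} ⊆ {x | 1/2 - 1/(n+1) ≤ f x} := by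
          apply closure_minimal ?_ (isClosed_le continuous_const f.continuous)
          intro y hy
          simp only [mem_setOf_eq] at hy ⊢
          linarith
        have := hcl hx'
        simp only [mem_setOf_eq] at this
        have : (1:ℝ)/(n+1) < 1/2 - f x := hn
        linarith [hcl hx']
  · intro x hx
    have : f x = 0 := hf0 hx
    simp only [mem_setOf_eq, this]; norm_num
  · have hcl : closure {x | f x < 1/2} ⊆ {x | f x ≤ 1/2} := by
      apply closure_minimal ?_ (isClosed_le f.continuous continuous_const)
      intro y hy
      simp only [mem_setOf_eq] at hy ⊢
      linarith
    intro x hx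
    by_contra hxU
    have : f x = 1 := hf1 hxU
    have := hcl hx
    simp only [mem_setOf_eq] at this
    linarith
end

section
/- If E is a regular Gδ subset of X and M is a compact metrizable space, then E × {α} is a regular Gδ subset of X × M for any α ∈ M. -/
theorem stmt_6 {X M : Type*} [TopologicalSpace X] [TopologicalSpace M]
    [CompactSpace M] [TopologicalSpace.MetrizableSpace M]
    (E : Set X) (hE : IsRegGDelta E) (α : M) :
    IsRegGDelta (E ×ˢ ({α} : Set M)) := by
  letI : MetricSpace M := TopologicalSpace.metrizableSpaceMetric M
  obtain ⟨U, hUo, hUsub, hUeq⟩ := hE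
  have hpos : ∀ n : ℕ, (0 : ℝ) < 1 / (n + 1) := fun n => by positivity
  refine ⟨fun n => U n ×ˢ Metric.ball α (1 / (n + 1)), ?_, ?_, ?_⟩
  · exact fun n => (hUo n).prod Metric.isOpen_ball
  · rintro n ⟨x, m⟩ ⟨hx, hm⟩
    rcases hm with rfl
    exact ⟨hUsub n hx, Metric.mem_ball_self (hpos n)⟩
  · ext ⟨x, m⟩
    simp only [Set.mem_prod, Set.mem_singleton_iff, Set.mem_iInter, closure_prod_eq]
    constructor
    · rintro ⟨hx, rfl⟩ n
      have hxU : x ∈ ⋂ n, closure (U n) := hUeq ▸ hx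
      exact ⟨Set.mem_iInter.mp hxU n,
        subset_closure (Metric.mem_ball_self (hpos n))⟩
    · intro h
      have hx : x ∈ E := by
        rw [hUeq]; exact Set.mem_iInter.mpr fun n => (h n).1
      have hm : m = α := by
        have hd : ∀ n : ℕ, dist m α ≤ 1 / (n + 1) := fun n =>
          Metric.closure_ball_subset_closedBall (h n).2
        have h0 : dist m α ≤ 0 := by
          by_contra hlt
          push_neg at hlt
          obtain ⟨n, hn⟩ := exists_nat_one_div_lt hlt
          exact absurd (hd n) (not_le.mpr (by exact_mod_cast hn))
        exact dist_le_zero.mp h0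
      exact ⟨hx, hm⟩
end

section
/- If Y is a compact space and D is a regular Gδ subset of X × Y, then the projection π(D) onto X is a regular Gδ subset of X. -/
/-!
Take the open sets `U n` witnessing that `D` is regular Gδ to be decreasing, and project them.
Since `Y` is compact, `π` is closed, so `closure (π '' U n) = π '' closure (U n)`; and for a
decreasing sequence of closed sets, the fibres over a point of `⋂ n, π '' closure (U n)` form a
decreasing sequence of nonempty compact sets, so `π` commutes with the intersection: `⋂ n, π '' closure (U n) = π '' D`.
-/

open Set

lemma IsRegGDelta.exists_antitone {X : Type*} [TopologicalSpace X] {D : Set X}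
    (hD : IsRegGDelta D) :
    ∃ U : ℕ → Set X, (∀ n, IsOpen (U n)) ∧ Antitone U ∧ (∀ n, D ⊆ U n) ∧
      D = ⋂ n, closure (U n) := by
  obtain ⟨U, hUo, hDU, hD⟩ := hD
  have hDdiss (n : ℕ) : D ⊆ dissipate U n := subset_iInter₂ fun k _ => hDU k
  refine ⟨dissipate U, fun n => (finite_Iic n).isOpen_biInter fun k _ => hUo k,
    antitone_dissipate, hDdiss, ?_⟩
  refine subset_antisymm (subset_iInter fun n => (hDdiss n).trans subset_closure) ?_
  exact (iInter_mono fun n => closure_mono (dissipate_subset le_rfl)).trans hD.ge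

theorem image_fst_iInter_of_directed_isClosed {X Y ι : Type*} [TopologicalSpace X]
    [TopologicalSpace Y] [CompactSpace Y] [Nonempty ι] {C : ι → Set (X × Y)}
    (hdir : Directed (· ⊇ ·) C) (hC : ∀ i, IsClosed (C i)) :
    Prod.fst '' ⋂ i, C i = ⋂ i, Prod.fst '' C i := by
  refine subset_antisymm (image_iInter_subset _ _) fun x hx => ?_
  have hfibre : ∀ i, (Prod.mk x ⁻¹' C i).Nonempty := fun i => by
    obtain ⟨⟨_, y⟩, hy, rfl⟩ := mem_iInter.1 hx i
    exact ⟨y, hy⟩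
  have hclosed : ∀ i, IsClosed (Prod.mk x ⁻¹' C i) := fun i =>
    (hC i).preimage (Continuous.prodMk_right x)
  obtain ⟨y, hy⟩ := IsCompact.nonempty_iInter_of_directed_nonempty_isCompact_isClosed _
    (hdir.mono_comp _ fun _ _ h => preimage_mono h) hfibre
    (fun i => (hclosed i).isCompact) hclosed
  exact ⟨(x, y), mem_iInter.2 fun i => mem_iInter.1 hy i, rfl⟩

theorem stmt_7 {X Y : Type*} [TopologicalSpace X] [TopologicalSpace Y]
    [CompactSpace Y] (D : Set (X × Y)) (hD : IsRegGDelta D) :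
    IsRegGDelta (Prod.fst '' D) := by
  obtain ⟨U, hUo, hUanti, hDU, rfl⟩ := hD.exists_antitone
  refine ⟨fun n => Prod.fst '' U n, fun n => isOpenMap_fst _ (hUo n),
    fun n => image_mono (hDU n), ?_⟩
  have hclosure (n : ℕ) : closure (Prod.fst '' U n) = Prod.fst '' closure (U n) :=
    isClosedMap_fst_of_compactSpace.closure_image_eq_of_continuous continuous_fst _
  simp only [hclosure]
  have hanti : Antitone fun n => closure (U n) := fun _ _ h => closure_mono (hUanti h)
  exact image_fst_iInter_of_directed_isClosed hanti.directed_ge fun _ => isClosed_closure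
end

section
/- If a space X is weakly coherently δ-normal (wcδn), then there exists a wcδn operator φ on X satisfying additionally: (1) L ⊆ φ(L,U) ⊆ U, and (2) if L ⊆ L' and U ⊆ U' then φ(L,U) ⊆ φ(L',U'). -/
def Wcdn (X : Type*) [TopologicalSpace X] : Prop :=
  ∃ φ : Set X → Set X → Set X,
    (∀ L U, IsRegGDelta L → IsOpen U → L ⊆ U → IsOpen (φ L U) ∧ L ⊆ φ L U) ∧
    (∀ L U K V, IsRegGDelta L → IsOpen U → L ⊆ U → IsRegGDelta K → IsOpen V → K ⊆ V →
      (φ L U ∩ φ K V).Nonempty → (L ∩ V).Nonempty ∨ (K ∩ U).Nonempty)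

theorem stmt_8 {X : Type*} [TopologicalSpace X] (h : Wcdn X) :
    ∃ φ : Set X → Set X → Set X,
      (∀ L U, IsRegGDelta L → IsOpen U → L ⊆ U →
        IsOpen (φ L U) ∧ L ⊆ φ L U ∧ φ L U ⊆ U) ∧
      (∀ L U K V, IsRegGDelta L → IsOpen U → L ⊆ U → IsRegGDelta K → IsOpen V → K ⊆ V →
        (φ L U ∩ φ K V).Nonempty → (L ∩ V).Nonempty ∨ (K ∩ U).Nonempty) ∧
      (∀ L U L' U', IsRegGDelta L → IsOpen U → L ⊆ U → IsRegGDelta L' → IsOpen U' → L' ⊆ U' →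
        L ⊆ L' → U ⊆ U' → φ L U ⊆ φ L' U') := by
  obtain ⟨φ₀, h1, h2⟩ := h
  refine ⟨fun L U => U ∩ ⋃ (K : Set X) (V : Set X)
      (_ : IsRegGDelta K ∧ IsOpen V ∧ K ⊆ V ∧ K ⊆ L ∧ V ⊆ U), φ₀ K V, ?_, ?_, ?_⟩
  · intro L U hL hU hLU
    refine ⟨hU.inter ?_, ?_, Set.inter_subset_left⟩
    · exact isOpen_iUnion fun K => isOpen_iUnion fun V => isOpen_iUnion
        fun ⟨hK, hV, hKV, _, _⟩ => (h1 K V hK hV hKV).1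
    · intro x hx
      refine ⟨hLU hx, Set.mem_iUnion.2 ⟨L, Set.mem_iUnion.2 ⟨U,
        Set.mem_iUnion.2 ⟨⟨hL, hU, hLU, subset_rfl, subset_rfl⟩, (h1 L U hL hU hLU).2 hx⟩⟩⟩⟩
  · intro L U K V hL hU hLU hK hV hKV ⟨x, ⟨_, hx1⟩, _, hx2⟩
    obtain ⟨L₁, hL₁⟩ := Set.mem_iUnion.1 hx1
    obtain ⟨U₁, hU₁⟩ := Set.mem_iUnion.1 hL₁
    obtain ⟨⟨hL₁r, hU₁o, hL₁U₁, hL₁L, hU₁U⟩, hxφ₁⟩ := Set.mem_iUnion.1 hU₁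
    obtain ⟨K₁, hK₁⟩ := Set.mem_iUnion.1 hx2
    obtain ⟨V₁, hV₁⟩ := Set.mem_iUnion.1 hK₁
    obtain ⟨⟨hK₁r, hV₁o, hK₁V₁, hK₁K, hV₁V⟩, hxφ₂⟩ := Set.mem_iUnion.1 hV₁
    rcases h2 L₁ U₁ K₁ V₁ hL₁r hU₁o hL₁U₁ hK₁r hV₁o hK₁V₁ ⟨x, hxφ₁, hxφ₂⟩ with
      ⟨y, hy1, hy2⟩ | ⟨y, hy1, hy2⟩
    · exact Or.inl ⟨y, hL₁L hy1, hV₁V hy2⟩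
    · exact Or.inr ⟨y, hK₁K hy1, hU₁U hy2⟩
  · intro L U L' U' _ _ _ _ _ _ hLL hUU x ⟨hxU, hx⟩
    obtain ⟨K₁, hK₁⟩ := Set.mem_iUnion.1 hx
    obtain ⟨V₁, hV₁⟩ := Set.mem_iUnion.1 hK₁
    obtain ⟨⟨hK₁r, hV₁o, hK₁V₁, hK₁L, hV₁U⟩, hxφ⟩ := Set.mem_iUnion.1 hV₁
    exact ⟨hUU hxU, Set.mem_iUnion.2 ⟨K₁, Set.mem_iUnion.2 ⟨V₁, Set.mem_iUnion.2
      ⟨⟨hK₁r, hV₁o, hK₁V₁, hK₁L.trans hLL, hV₁U.trans hUU⟩, hxφ⟩⟩⟩⟩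
end

section
/- Every monotonically δ-normal (mδn) space is monotonically coherently δ-normal (mcδn). -/
def Mdn (X : Type*) [TopologicalSpace X] : Prop :=
  ∃ H : Set X → Set X → Set X,
    (∀ C D, IsClosed C → IsClosed D → Disjoint C D → (IsRegGDelta C ∨ IsRegGDelta D) →
      IsOpen (H C D) ∧ C ⊆ H C D ∧ closure (H C D) ⊆ Dᶜ) ∧
    (∀ C D C' D', IsClosed C → IsClosed D → Disjoint C D → (IsRegGDelta C ∨ IsRegGDelta D) →
      IsClosed C' → IsClosed D' → Disjoint C' D' → (IsRegGDelta C' ∨ IsRegGDelta D') →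
      C ⊆ C' → D' ⊆ D → H C D ⊆ H C' D')

def Mcdn (X : Type*) [TopologicalSpace X] : Prop :=
  ∃ φ : Set X → Set X → Set X,
    (∀ L U, IsRegGDelta L → IsOpen U → L ⊆ U →
      IsOpen (φ L U) ∧ L ⊆ φ L U ∧ closure (φ L U) ⊆ U) ∧
    (∀ L U K V, IsRegGDelta L → IsOpen U → L ⊆ U → IsRegGDelta K → IsOpen V → K ⊆ V →
      (φ L U ∩ φ K V).Nonempty → (L ∩ V).Nonempty ∨ (K ∩ U).Nonempty) ∧
    (∀ L U L' U', IsRegGDelta L → IsOpen U → L ⊆ U → IsRegGDelta L' → IsOpen U' → L' ⊆ U' →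
      L ⊆ L' → U ⊆ U' → φ L U ⊆ φ L' U')

lemma IsRegGDelta.isClosed {X : Type*} [TopologicalSpace X] {D : Set X}
    (h : IsRegGDelta D) : IsClosed D := by
  obtain ⟨U, _, _, hD⟩ := h
  rw [hD]
  exact isClosed_iInter fun n => isClosed_closure

theorem stmt_9 {X : Type*} [TopologicalSpace X] (h : Mdn X) : Mcdn X := by
  obtain ⟨H, hH, hmono⟩ := h
  refine ⟨fun L U => H L Uᶜ \ closure (H Uᶜ L), ?_, ?_, ?_⟩
  · intro L U hL hU hLU
    have hd1 : Disjoint L Uᶜ := Set.disjoint_compl_right_iff_subset.mpr hLU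
    have h1 := hH L Uᶜ hL.isClosed hU.isClosed_compl hd1 (Or.inl hL)
    have h2 := hH Uᶜ L hU.isClosed_compl hL.isClosed hd1.symm (Or.inr hL)
    refine ⟨h1.1.sdiff isClosed_closure, ?_, ?_⟩
    · intro x hx
      exact ⟨h1.2.1 hx, fun hc => h2.2.2 hc hx⟩
    · calc closure (H L Uᶜ \ closure (H Uᶜ L)) ⊆ closure (H L Uᶜ) :=
            closure_mono Set.diff_subset
        _ ⊆ Uᶜᶜ := h1.2.2
        _ = U := compl_compl U
  · intro L U K V hL hU hLU hK hV hKV ⟨x, hx1, hx2⟩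
    by_contra hc
    push_neg at hc
    obtain ⟨hLV0, hKU0⟩ := hc
    have hLV : Disjoint L V := Set.disjoint_iff_inter_eq_empty.mpr hLV0
    have hKU : Disjoint K U := Set.disjoint_iff_inter_eq_empty.mpr hKU0
    have hd1 : Disjoint L Uᶜ := Set.disjoint_compl_right_iff_subset.mpr hLU
    have hdVK : Disjoint Vᶜ K := (Set.disjoint_compl_right_iff_subset.mpr hKV).symm
    have hsub : H L Uᶜ ⊆ H Vᶜ K :=
      hmono L Uᶜ Vᶜ K hL.isClosed hU.isClosed_compl hd1 (Or.inl hL)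
        hV.isClosed_compl hK.isClosed hdVK (Or.inr hK)
        (Set.subset_compl_iff_disjoint_right.mpr hLV) hKU.subset_compl_right
    exact hx2.2 (subset_closure (hsub hx1.1))
  · intro L U L' U' hL hU hLU hL' hU' hLU' hLL' hUU'
    have hd1 : Disjoint L Uᶜ := Set.disjoint_compl_right_iff_subset.mpr hLU
    have hd2 : Disjoint L' U'ᶜ := Set.disjoint_compl_right_iff_subset.mpr hLU'
    have h1 : H L Uᶜ ⊆ H L' U'ᶜ :=
      hmono L Uᶜ L' U'ᶜ hL.isClosed hU.isClosed_compl hd1 (Or.inl hL)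
        hL'.isClosed hU'.isClosed_compl hd2 (Or.inl hL')
        hLL' (Set.compl_subset_compl.mpr hUU')
    have h2 : H U'ᶜ L' ⊆ H Uᶜ L :=
      hmono U'ᶜ L' Uᶜ L hU'.isClosed_compl hL'.isClosed hd2.symm (Or.inr hL')
        hU.isClosed_compl hL.isClosed hd1.symm (Or.inr hL)
        (Set.compl_subset_compl.mpr hUU') hLL'
    intro x hx
    exact ⟨h1 hx.1, fun hc => hx.2 (closure_mono h2 hc)⟩
end

section
/- Every monotonically coherently δ-normal (mcδn) space is left monotonically δ-normal (lmδn). -/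
def Lmdn (X : Type*) [TopologicalSpace X] : Prop :=
  ∃ H : Set X → Set X → Set X,
    (∀ C D, IsRegGDelta C → IsClosed C → IsClosed D → Disjoint C D →
      IsOpen (H C D) ∧ C ⊆ H C D ∧ closure (H C D) ⊆ Dᶜ) ∧
    (∀ C D C' D', IsRegGDelta C → IsClosed C → IsClosed D → Disjoint C D →
      IsRegGDelta C' → IsClosed C' → IsClosed D' → Disjoint C' D' →
      C ⊆ C' → D' ⊆ D → H C D ⊆ H C' D')

theorem stmt_11 {X : Type*} [TopologicalSpace X] (h : Mcdn X) : Lmdn X := by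
  obtain ⟨φ, h1, _, h3⟩ := h
  refine ⟨fun C D => φ C Dᶜ, ?_, ?_⟩
  · intro C D hrg hC hD hdisj
    exact h1 C Dᶜ hrg hD.isOpen_compl (hdisj.subset_compl_right)
  · intro C D C' D' hrg hC hD hdisj hrg' hC' hD' hdisj' hCC hDD
    exact h3 C Dᶜ C' D'ᶜ hrg hD.isOpen_compl
      (hdisj.subset_compl_right) hrg' hD'.isOpen_compl
      hdisj'.subset_compl_right hCC (Set.compl_subset_compl.mpr hDD)
end

section
/- Every monotonically normal space is monotonically Σ-normal (mΣn). -/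
def MonNormalOp (X : Type*) [TopologicalSpace X] : Prop :=
  ∃ H : Set X → Set X → Set X,
    (∀ C D, IsClosed C → IsClosed D → Disjoint C D →
      IsOpen (H C D) ∧ C ⊆ H C D ∧ closure (H C D) ⊆ Dᶜ) ∧
    (∀ C D C' D', IsClosed C → IsClosed D → Disjoint C D →
      IsClosed C' → IsClosed D' → Disjoint C' D' →
      C ⊆ C' → D' ⊆ D → H C D ⊆ H C' D')

def MSigmaN (X : Type*) [TopologicalSpace X] : Prop :=
  ∃ W : Set X → Set X → Set X,
    (∀ C U, IsClosed C → IsOpen U → C ⊆ U →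
      IsOpen (W C U) ∧ IsRegGDelta (W C U)ᶜ ∧ C ⊆ W C U ∧ W C U ⊆ U) ∧
    (∀ C U C' U', IsClosed C → IsOpen U → C ⊆ U → IsClosed C' → IsOpen U' → C' ⊆ U' →
      C ⊆ C' → U ⊆ U' → W C U ⊆ W C' U')

/-!
Given a monotone normality operator `H`, shrink an open set `U` around a closed set `C` repeatedly:
`G₀ = H(C, X ∖ U)` and `Gₙ₊₁ = H(cl Gₙ, X ∖ U)`. Then `cl Gₙ ⊆ Gₙ₊₁ ⊆ cl Gₙ₊₁ ⊆ U`, so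
`W(C, U) = ⋃ₙ Gₙ` is open, lies between `C` and `U`, and its complement is the regular Gδ set
`⋂ₙ cl (X ∖ cl Gₙ)`. Monotonicity of `H` passes to every `Gₙ`, hence to `W`.
-/

open Set

section

variable {X : Type*} [TopologicalSpace X] {H : Set X → Set X → Set X} {C U : Set X}

theorem isRegGDelta_compl_iUnion {V : ℕ → Set X} (hV : ∀ n, IsOpen (V n))
    (hVsucc : ∀ n, closure (V n) ⊆ V (n + 1)) : IsRegGDelta (⋃ n, V n)ᶜ := by
  refine ⟨fun n => (closure (V n))ᶜ, fun n => isClosed_closure.isOpen_compl,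
    fun n => compl_subset_compl.mpr ((hVsucc n).trans (subset_iUnion V (n + 1))), ?_⟩
  refine Subset.antisymm
    (fun x hx => mem_iInter.mpr fun n => subset_closure fun hxn =>
      hx (subset_iUnion V (n + 1) (hVsucc n hxn))) ?_
  intro x hx hxV
  obtain ⟨n, hxn⟩ := mem_iUnion.mp hxV
  have hx' : x ∈ (interior (closure (V n)))ᶜ := by
    simpa only [closure_compl] using mem_iInter.mp hx n
  exact hx' (interior_maximal subset_closure (hV n) hxn)

/-- The separation clause of `MonNormalOp`. -/
def SeparatesClosed (H : Set X → Set X → Set X) : Prop :=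
  ∀ C D, IsClosed C → IsClosed D → Disjoint C D →
    IsOpen (H C D) ∧ C ⊆ H C D ∧ closure (H C D) ⊆ Dᶜ

theorem SeparatesClosed.shrink (hH : SeparatesClosed H) (hC : IsClosed C) (hU : IsOpen U)
    (hCU : C ⊆ U) : IsOpen (H C Uᶜ) ∧ C ⊆ H C Uᶜ ∧ closure (H C Uᶜ) ⊆ U := by
  simpa only [compl_compl] using
    hH C Uᶜ hC hU.isClosed_compl (disjoint_compl_right_iff_subset.mpr hCU)

def shrinkSeq (H : Set X → Set X → Set X) (C U : Set X) : ℕ → Set X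
  | 0 => H C Uᶜ
  | n + 1 => H (closure (shrinkSeq H C U n)) Uᶜ

theorem SeparatesClosed.shrinkSeq_spec (hH : SeparatesClosed H) (hC : IsClosed C)
    (hU : IsOpen U) (hCU : C ⊆ U) : ∀ n,
    IsOpen (shrinkSeq H C U n) ∧ C ⊆ shrinkSeq H C U n ∧ closure (shrinkSeq H C U n) ⊆ U
  | 0 => hH.shrink hC hU hCU
  | n + 1 => by
    obtain ⟨-, hCn, hcl⟩ := hH.shrinkSeq_spec hC hU hCU n
    obtain ⟨hopen, hsub, hcl'⟩ := hH.shrink isClosed_closure hU hcl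
    exact ⟨hopen, hCn.trans (subset_closure.trans hsub), hcl'⟩

theorem SeparatesClosed.closure_shrinkSeq_subset_succ (hH : SeparatesClosed H)
    (hC : IsClosed C) (hU : IsOpen U) (hCU : C ⊆ U) (n : ℕ) :
    closure (shrinkSeq H C U n) ⊆ shrinkSeq H C U (n + 1) :=
  (hH.shrink isClosed_closure hU (hH.shrinkSeq_spec hC hU hCU n).2.2).2.1

theorem SeparatesClosed.shrinkSeq_mono (hH : SeparatesClosed H)
    (hmono : ∀ C D C' D', IsClosed C → IsClosed D → Disjoint C D →
      IsClosed C' → IsClosed D' → Disjoint C' D' → C ⊆ C' → D' ⊆ D → H C D ⊆ H C' D')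
    {C' U' : Set X} (hC : IsClosed C) (hU : IsOpen U) (hCU : C ⊆ U)
    (hC' : IsClosed C') (hU' : IsOpen U') (hCU' : C' ⊆ U') (hCC' : C ⊆ C') (hUU' : U ⊆ U') :
    ∀ n, shrinkSeq H C U n ⊆ shrinkSeq H C' U' n
  | 0 => hmono _ _ _ _ hC hU.isClosed_compl (disjoint_compl_right_iff_subset.mpr hCU)
      hC' hU'.isClosed_compl (disjoint_compl_right_iff_subset.mpr hCU') hCC'
      (compl_subset_compl.mpr hUU')
  | n + 1 => hmono _ _ _ _ isClosed_closure hU.isClosed_compl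
      (disjoint_compl_right_iff_subset.mpr (hH.shrinkSeq_spec hC hU hCU n).2.2)
      isClosed_closure hU'.isClosed_compl
      (disjoint_compl_right_iff_subset.mpr (hH.shrinkSeq_spec hC' hU' hCU' n).2.2)
      (closure_mono (hH.shrinkSeq_mono hmono hC hU hCU hC' hU' hCU' hCC' hUU' n))
      (compl_subset_compl.mpr hUU')

end

theorem stmt_12 {X : Type*} [TopologicalSpace X] (h : MonNormalOp X) : MSigmaN X := by
  obtain ⟨H, hH, hmono⟩ := h
  have hH : SeparatesClosed H := hH
  refine ⟨fun C U => ⋃ n, shrinkSeq H C U n, fun C U hC hU hCU => ?_,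
    fun C U C' U' hC hU hCU hC' hU' hCU' hCC' hUU' =>
      iUnion_mono (hH.shrinkSeq_mono hmono hC hU hCU hC' hU' hCU' hCC' hUU')⟩
  have hspec := hH.shrinkSeq_spec hC hU hCU
  exact ⟨isOpen_iUnion fun n => (hspec n).1,
    isRegGDelta_compl_iUnion (fun n => (hspec n).1) (hH.closure_shrinkSeq_subset_succ hC hU hCU),
    (hspec 0).2.1.trans (subset_iUnion _ 0),
    iUnion_subset fun n => subset_closure.trans (hspec n).2.2⟩
end

section
/- Every perfectly normal space is monotonically Σ-normal (mΣn). -/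
lemma closed_isRegGDelta {X : Type*} [TopologicalSpace X] [NormalSpace X]
    (hperf : ∀ C : Set X, IsClosed C → IsGδ C) {D : Set X} (hD : IsClosed D) :
    IsRegGDelta D := by
  obtain ⟨f, hf, hfD⟩ := (hperf D hD).eq_iInter_nat
  have hDf : ∀ n, D ⊆ f n := fun n => hfD ▸ Set.iInter_subset f n
  choose V hVopen hDV hVcl using fun n => normal_exists_closure_subset hD (hf n) (hDf n)
  refine ⟨V, hVopen, hDV, Set.Subset.antisymm ?_ ?_⟩
  · exact Set.subset_iInter fun n => (hDV n).trans subset_closure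
  · calc ⋂ n, closure (V n) ⊆ ⋂ n, f n := Set.iInter_mono hVcl
      _ = D := hfD.symm

theorem stmt_13 {X : Type*} [TopologicalSpace X] [NormalSpace X]
    (hperf : ∀ C : Set X, IsClosed C → IsGδ C) : MSigmaN X := by
  refine ⟨fun _ U => U, ?_, ?_⟩
  · intro C U hC hU hCU
    exact ⟨hU, closed_isRegGDelta hperf (isClosed_compl_iff.mpr hU), hCU, subset_rfl⟩
  · intro C U C' U' _ _ _ _ _ _ _ hUU'
    exact hUU'
end

section
/- Every Tychonoff space with Gδ points has property (★): there are operators D and E assigning to each point x and open neighbourhood U of x disjoint regular Gδ sets D(x,U) and E(x,U) with x ∈ D(x,U) ⊆ U, such that for every open V and y ∈ V, if x ∉ V and y ∉ U then D(y,V) ⊆ E(x,U). -/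
def PropertyStar (X : Type*) [TopologicalSpace X] : Prop :=
  ∃ D E : X → Set X → Set X,
    (∀ x U, IsOpen U → x ∈ U →
      IsRegGDelta (D x U) ∧ IsRegGDelta (E x U) ∧ Disjoint (D x U) (E x U) ∧
      x ∈ D x U ∧ D x U ⊆ U) ∧
    (∀ x U y V, IsOpen U → x ∈ U → IsOpen V → y ∈ V → x ∉ V → y ∉ U →
      D y V ⊆ E x U)

open Set Topology

section

variable {X : Type*} [TopologicalSpace X]

theorem isRegGDelta_of_closure_subset {A : Set X} (U F : ℕ → Set X) (hU : ∀ n, IsOpen (U n))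
    (hAU : ∀ n, A ⊆ U n) (hUF : ∀ n, closure (U n) ⊆ F n) (hFA : ⋂ n, F n ⊆ A) :
    IsRegGDelta A :=
  ⟨U, hU, hAU, Subset.antisymm (subset_iInter fun n => (hAU n).trans subset_closure)
    ((iInter_mono hUF).trans hFA)⟩

theorem IsGδ.isRegGDelta_singleton [RegularSpace X] {x : X} (h : IsGδ ({x} : Set X)) :
    IsRegGDelta ({x} : Set X) := by
  obtain ⟨G, hG_open, hG⟩ := h.eq_iInter_nat
  have hxG : ∀ n, x ∈ G n := fun n => mem_iInter.1 (hG ▸ mem_singleton x) n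
  choose W hW_nhds hW_closed hWG using
    fun n => exists_mem_nhds_isClosed_subset ((hG_open n).mem_nhds (hxG n))
  exact isRegGDelta_of_closure_subset (fun n => interior (W n)) G (fun _ => isOpen_interior)
    (fun n => singleton_subset_iff.2 (mem_interior_iff_mem_nhds.2 (hW_nhds n)))
    (fun n => ((hW_closed n).closure_subset_iff.2 interior_subset).trans (hWG n)) hG.ge

theorem isRegGDelta_preimage_Ici {f : X → ℝ} (hf : Continuous f) (a : ℝ) :
    IsRegGDelta (f ⁻¹' Ici a) := by
  refine isRegGDelta_of_closure_subset (fun n : ℕ => f ⁻¹' Ioi (a - 1 / (n + 1)))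
    (fun n => f ⁻¹' Ici (a - 1 / (n + 1))) (fun _ => isOpen_Ioi.preimage hf) ?_ ?_ ?_
  · exact fun n z hz => (sub_lt_self a Nat.one_div_pos_of_nat).trans_le hz
  · exact fun n => closure_minimal (preimage_mono Ioi_subset_Ici_self) (isClosed_Ici.preimage hf)
  · intro z hz
    simp only [mem_iInter, mem_preimage, mem_Ici] at hz ⊢
    refine le_of_forall_sub_le fun ε hε => ?_
    obtain ⟨n, hn⟩ := exists_nat_one_div_lt hε
    linarith [hz n]

theorem exists_isRegGDelta_compl_subset_of_mem [CompletelyRegularSpace X] {x : X} {U : Set X}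
    (hU : IsOpen U) (hx : x ∈ U) : ∃ A : Set X, IsRegGDelta A ∧ x ∉ A ∧ Uᶜ ⊆ A := by
  obtain ⟨f, hf, hfx, hfU⟩ := CompletelyRegularSpace.completely_regular_isOpen x U hU hx
  refine ⟨(fun z => (f z : ℝ)) ⁻¹' Ici 1,
    isRegGDelta_preimage_Ici (continuous_subtype_val.comp hf) 1, ?_, fun z hz => ?_⟩
  · simp [hfx]
  · simp [hfU hz]

end

theorem stmt_14_general {X : Type*} [TopologicalSpace X] [CompletelyRegularSpace X]
    (hGδ : ∀ x : X, IsGδ ({x} : Set X)) : PropertyStar X := by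
  choose! E hE hxE hUE using
    fun (x : X) U (hU : IsOpen U) (hx : x ∈ U) => exists_isRegGDelta_compl_subset_of_mem hU hx
  refine ⟨fun x _ => {x}, E, fun x U hU hx => ?_, fun x U y V hU hx _ _ _ hyU => ?_⟩
  · exact ⟨(hGδ x).isRegGDelta_singleton, hE x U hU hx,
      disjoint_singleton_left.2 (hxE x U hU hx), rfl, singleton_subset_iff.2 hx⟩
  · exact singleton_subset_iff.2 (hUE x U hU hx hyU)

theorem stmt_14 {X : Type*} [TopologicalSpace X] [CompletelyRegularSpace X] [T1Space X]
    (hGδ : ∀ x : X, IsGδ ({x} : Set X)) : PropertyStar X :=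
  stmt_14_general hGδ
end

section
/- If every point of X is a regular Gδ set, then X is monotonically normal if and only if X is weakly coherently δ-normal (wcδn). -/
def MonNormalB (X : Type*) [TopologicalSpace X] : Prop :=
  ∃ ψ : X → Set X → Set X,
    (∀ x U, IsOpen U → x ∈ U → IsOpen (ψ x U) ∧ x ∈ ψ x U) ∧
    (∀ x U y V, IsOpen U → x ∈ U → IsOpen V → y ∈ V →
      (ψ x U ∩ ψ y V).Nonempty → x ∈ V ∨ y ∈ U)

theorem stmt_16 {X : Type*} [TopologicalSpace X]
    (h : ∀ x : X, IsRegGDelta ({x} : Set X)) :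
    MonNormalB X ↔ Wcdn X := by
  constructor
  · rintro ⟨ψ, hψ1, hψ2⟩
    refine ⟨fun L U => ⋃ x ∈ L, ψ x U, ?_, ?_⟩
    · intro L U _ hU hLU
      constructor
      · exact isOpen_biUnion fun x hx => (hψ1 x U hU (hLU hx)).1
      · intro x hx
        exact Set.mem_biUnion hx (hψ1 x U hU (hLU hx)).2
    · rintro L U K V _ hU hLU _ hV hKV ⟨z, hz1, hz2⟩
      simp only [Set.mem_iUnion] at hz1 hz2
      obtain ⟨x, hx, hzx⟩ := hz1
      obtain ⟨y, hy, hzy⟩ := hz2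
      rcases hψ2 x U y V hU (hLU hx) hV (hKV hy) ⟨z, hzx, hzy⟩ with h1 | h1
      · exact Or.inl ⟨x, hx, h1⟩
      · exact Or.inr ⟨y, hy, h1⟩
  · rintro ⟨φ, hφ1, hφ2⟩
    refine ⟨fun x U => φ {x} U, ?_, ?_⟩
    · intro x U hU hxU
      obtain ⟨ho, hs⟩ := hφ1 {x} U (h x) hU (Set.singleton_subset_iff.2 hxU)
      exact ⟨ho, hs rfl⟩
    · intro x U y V hU hxU hV hyV hne
      rcases hφ2 {x} U {y} V (h x) hU (Set.singleton_subset_iff.2 hxU)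
        (h y) hV (Set.singleton_subset_iff.2 hyV) hne with ⟨z, hz, hzV⟩ | ⟨z, hz, hzU⟩
      · exact Or.inl (hz ▸ hzV)
      · exact Or.inr (hz ▸ hzU)
end

section
/- A space X is coherently δ-normal (cδn) if and only if X is weakly coherently δ-normal (wcδn) and δ-normal. -/
def Cdn (X : Type*) [TopologicalSpace X] : Prop :=
  ∃ φ : Set X → Set X → Set X,
    (∀ L U, IsRegGDelta L → IsOpen U → L ⊆ U →
      IsOpen (φ L U) ∧ L ⊆ φ L U ∧ closure (φ L U) ⊆ U) ∧
    (∀ L U K V, IsRegGDelta L → IsOpen U → L ⊆ U → IsRegGDelta K → IsOpen V → K ⊆ V →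
      (φ L U ∩ φ K V).Nonempty → (L ∩ V).Nonempty ∨ (K ∩ U).Nonempty)

def DeltaNormal (X : Type*) [TopologicalSpace X] : Prop :=
  ∀ C D : Set X, IsClosed C → IsClosed D → Disjoint C D → (IsRegGDelta C ∨ IsRegGDelta D) →
    ∃ U V : Set X, IsOpen U ∧ IsOpen V ∧ C ⊆ U ∧ D ⊆ V ∧ Disjoint U V

theorem stmt_17 {X : Type*} [TopologicalSpace X] :
    Cdn X ↔ Wcdn X ∧ DeltaNormal X := by
  constructor
  · rintro ⟨φ, h1, h2⟩
    refine ⟨⟨φ, fun L U hL hU hLU => ⟨(h1 L U hL hU hLU).1, (h1 L U hL hU hLU).2.1⟩, h2⟩, ?_⟩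
    intro C D hC hD hCD hreg
    rcases hreg with hreg | hreg
    · have hsub : C ⊆ Dᶜ := hCD.subset_compl_right
      obtain ⟨ho, hs, hc⟩ := h1 C Dᶜ hreg hD.isOpen_compl hsub
      refine ⟨φ C Dᶜ, (closure (φ C Dᶜ))ᶜ, ho, isOpen_compl_iff.2 isClosed_closure, hs,
        fun x hx hmem => hc hmem hx, ?_⟩
      exact Set.disjoint_left.2 fun x hx h2 => h2 (subset_closure hx)
    · have hsub : D ⊆ Cᶜ := hCD.symm.subset_compl_right
      obtain ⟨ho, hs, hc⟩ := h1 D Cᶜ hreg hC.isOpen_compl hsub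
      refine ⟨(closure (φ D Cᶜ))ᶜ, φ D Cᶜ, isOpen_compl_iff.2 isClosed_closure, ho,
        fun x hx hmem => hc hmem hx, hs, ?_⟩
      exact Set.disjoint_left.2 fun x hx h2 => hx (subset_closure h2)
  · rintro ⟨⟨φ, hφ1, hφ2⟩, hδ⟩
    have key : ∀ L U : Set X, IsRegGDelta L → IsOpen U → L ⊆ U →
        ∃ A : Set X, IsOpen A ∧ L ⊆ A ∧ closure A ⊆ U := by
      intro L U hL hU hLU
      have hLc : IsClosed L := by
        obtain ⟨W, hWo, hWs, hWe⟩ := hL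
        rw [hWe]; exact isClosed_iInter fun n => isClosed_closure
      obtain ⟨A, B, hA, hB, hLA, hUB, hAB⟩ :=
        hδ L Uᶜ hLc hU.isClosed_compl (disjoint_compl_right.mono_left hLU) (Or.inl hL)
      refine ⟨A, hA, hLA, ?_⟩
      have hcl : closure A ⊆ Bᶜ :=
        closure_minimal hAB.subset_compl_right hB.isClosed_compl
      intro x hx
      by_contra hxU
      exact hcl hx (hUB hxU)
    classical
    choose! A hAo hAs hAc using key
    refine ⟨fun L U => φ L U ∩ A L U, ?_, ?_⟩
    · intro L U hL hU hLU
      exact ⟨((hφ1 L U hL hU hLU).1).inter (hAo L U hL hU hLU),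
        Set.subset_inter (hφ1 L U hL hU hLU).2 (hAs L U hL hU hLU),
        (closure_mono Set.inter_subset_right).trans (hAc L U hL hU hLU)⟩
    · intro L U K V hL hU hLU hK hV hKV ⟨x, hx1, hx2⟩
      exact hφ2 L U K V hL hU hLU hK hV hKV ⟨x, hx1.1, hx2.1⟩
end

section
/- If X is δ-semi-stratifiable and left monotonically δ-normal (lmδn), then X is δ-stratifiable. -/
def DeltaSemiStrat (X : Type*) [TopologicalSpace X] : Prop :=
  ∃ U : ℕ → Set X → Set X,
    (∀ n D, IsRegGDelta D → IsOpen (U n D) ∧ D ⊆ U n D) ∧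
    (∀ n D E, IsRegGDelta D → IsRegGDelta E → E ⊆ D → U n E ⊆ U n D) ∧
    (∀ D, IsRegGDelta D → D = ⋂ n, U n D)

def DeltaStrat (X : Type*) [TopologicalSpace X] : Prop :=
  ∃ U : ℕ → Set X → Set X,
    (∀ n D, IsRegGDelta D → IsOpen (U n D) ∧ D ⊆ U n D) ∧
    (∀ n D E, IsRegGDelta D → IsRegGDelta E → E ⊆ D → U n E ⊆ U n D) ∧
    (∀ D, IsRegGDelta D → D = ⋂ n, U n D) ∧
    (∀ D, IsRegGDelta D → D = ⋂ n, closure (U n D))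

theorem stmt_18 {X : Type*} [TopologicalSpace X]
    (h1 : DeltaSemiStrat X) (h2 : Lmdn X) : DeltaStrat X := by
  obtain ⟨U, hU1, hU2, hU3⟩ := h1
  obtain ⟨H, hH1, hH2⟩ := h2
  have hclosed : ∀ D : Set X, IsRegGDelta D → IsClosed D := by
    rintro D ⟨W, _, _, hW3⟩
    rw [hW3]
    exact isClosed_iInter fun n => isClosed_closure
  -- key facts for each regular Gδ D and n
  have key : ∀ (n : ℕ) (D : Set X), IsRegGDelta D →
      IsOpen (H D (U n D)ᶜ) ∧ D ⊆ H D (U n D)ᶜ ∧ closure (H D (U n D)ᶜ) ⊆ U n D := by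
    intro n D hD
    obtain ⟨hUo, hUs⟩ := hU1 n D hD
    have hdisj : Disjoint D (U n D)ᶜ := Set.disjoint_compl_right_iff_subset.mpr hUs
    obtain ⟨h1, h2, h3⟩ := hH1 D (U n D)ᶜ hD (hclosed D hD) hUo.isClosed_compl hdisj
    exact ⟨h1, h2, by simpa using h3⟩
  refine ⟨fun n D => H D (U n D)ᶜ, ?_, ?_, ?_, ?_⟩
  · intro n D hD
    exact ⟨(key n D hD).1, (key n D hD).2.1⟩
  · intro n D E hD hE hED
    have hUsub := hU2 n D E hD hE hED
    exact hH2 E (U n E)ᶜ D (U n D)ᶜ hE (hclosed E hE)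
      ((hU1 n E hE).1.isClosed_compl)
      (Set.disjoint_compl_right_iff_subset.mpr (hU1 n E hE).2)
      hD (hclosed D hD) ((hU1 n D hD).1.isClosed_compl)
      (Set.disjoint_compl_right_iff_subset.mpr (hU1 n D hD).2)
      hED (Set.compl_subset_compl.mpr hUsub)
  · intro D hD
    apply Set.Subset.antisymm
    · exact Set.subset_iInter fun n => (key n D hD).2.1
    · calc ⋂ n, H D (U n D)ᶜ ⊆ ⋂ n, U n D :=
            Set.iInter_mono fun n => subset_closure.trans (key n D hD).2.2
        _ = D := (hU3 D hD).symm
  · intro D hD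
    apply Set.Subset.antisymm
    · exact Set.subset_iInter fun n => (key n D hD).2.1.trans subset_closure
    · calc ⋂ n, closure (H D (U n D)ᶜ) ⊆ ⋂ n, U n D :=
            Set.iInter_mono fun n => (key n D hD).2.2
        _ = D := (hU3 D hD).symm
end
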